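/- arXiv:2312.03975 — 4 statements merged into one kernel-verified Lean document; each statement's English description precedes it below -/
import Mathlib

section
/- Let wt : points(V) → ℝ on an n-dimensional F_q-vector space V (n ≥ 2) be such that every line has total weight in {0,1}, and suppose every point has weight in {-1/(q²+q), 0, 1/(q+1), 1/q}. If L is a line containing a point of weight 0, then every point of L has weight 0 or 1/q, and L contains either exactly 1 or exactly q+1 points of weight 0. -/
/-!
A line carries `q + 1` points, being a projective line over `𝔽_q`. Leaving out the weight-`0`
point `P₀`, the other `q` points carry the whole line weight. If that weight is `1`, then, as no
admissible weight exceeds `1/q`, each of the `q` points weighs exactly `1/q`. If it is `0`, a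
point of positive weight, hence of weight at least `1/(q+1)`, cannot be compensated by the other
`q - 1` points, of weight at least `-1/(q²+q)` each; so no weight is positive, and then all
weights vanish.
-/

open Module

/-- The total weight of the points of a subspace `L`. -/
noncomputable def subWeight {F V : Type} [Field F] [AddCommGroup V] [Module F V]
    (wt : Submodule F V → ℝ) (L : Submodule F V) : ℝ :=
  ∑ᶠ P ∈ {P : Submodule F V | finrank F P = 1 ∧ P ≤ L}, wt P

theorem Submodule.nat_card_points_of_finrank_eq_two {F V : Type*} [Field F] [Finite F]
    [AddCommGroup V] [Module F V] {L : Submodule F V} (hL : finrank F L = 2) :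
    Nat.card {P : Submodule F V // finrank F P = 1 ∧ P ≤ L} = Nat.card F + 1 := by
  let e : {H : Submodule F L // finrank F H = 1} ≃
      {P : Submodule F V // finrank F P = 1 ∧ P ≤ L} :=
    ((Submodule.MapSubtype.orderIso L).toEquiv.subtypeEquiv
      (q := fun P : {P : Submodule F V // P ≤ L} => finrank F P.1 = 1)
      fun H => by rw [← Submodule.finrank_map_subtype_eq L H]; rfl).trans <|
    (Equiv.subtypeSubtypeEquivSubtypeInter (· ≤ L) fun P => finrank F P = 1).trans
      (Equiv.subtypeEquivRight fun _ => and_comm)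
  rw [← Nat.card_congr e, ← Nat.card_congr (Projectivization.equivSubmodule F L),
    Projectivization.card_of_finrank_two F L hL]

open Finset

def IsAdmissibleWeight (q : ℕ) (t : ℝ) : Prop :=
  t = -(1 / (q ^ 2 + q : ℝ)) ∨ t = 0 ∨ t = 1 / ((q : ℝ) + 1) ∨ t = 1 / (q : ℝ)

namespace IsAdmissibleWeight

variable {q : ℕ} {t : ℝ}

theorem neg_le (h : IsAdmissibleWeight q t) : -(1 / (q ^ 2 + q : ℝ)) ≤ t := by
  have : (0 : ℝ) ≤ 1 / (q ^ 2 + q : ℝ) := by positivity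
  rcases h with rfl | rfl | rfl | rfl
  · rfl
  all_goals linarith [show (0 : ℝ) ≤ 1 / ((q : ℝ) + 1) by positivity,
    show (0 : ℝ) ≤ 1 / (q : ℝ) by positivity]

theorem le_inv (hq : 0 < q) (h : IsAdmissibleWeight q t) : t ≤ 1 / (q : ℝ) := by
  have hqR : (0 : ℝ) < q := by exact_mod_cast hq
  have : (0 : ℝ) ≤ 1 / (q ^ 2 + q : ℝ) := by positivity
  rcases h with rfl | rfl | rfl | rfl
  · linarith [show (0 : ℝ) < 1 / (q : ℝ) by positivity]
  · positivity
  · exact one_div_le_one_div_of_le hqR (by linarith)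
  · rfl

theorem le_of_pos (hq : 0 < q) (h : IsAdmissibleWeight q t) (ht : 0 < t) :
    1 / ((q : ℝ) + 1) ≤ t := by
  have hqR : (0 : ℝ) < q := by exact_mod_cast hq
  rcases h with rfl | rfl | rfl | rfl
  · linarith [show (0 : ℝ) ≤ 1 / (q ^ 2 + q : ℝ) by positivity]
  · exact absurd ht (lt_irrefl 0)
  · rfl
  · exact one_div_le_one_div_of_le hqR (by linarith)

end IsAdmissibleWeight

theorem Finset.forall_eq_zero_of_sum_eq_zero_of_gap {α : Type*} {T : Finset α} {w : α → ℝ}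
    {ε δ : ℝ} (hlow : ∀ x ∈ T, -ε ≤ w x) (hgap : ∀ x ∈ T, 0 < w x → δ ≤ w x)
    (hεδ : ((#T : ℝ) - 1) * ε < δ) (hsum : ∑ x ∈ T, w x = 0) : ∀ x ∈ T, w x = 0 := by
  classical
  refine (sum_eq_zero_iff_of_nonpos fun x hx => ?_).mp hsum
  by_contra! hpos
  have hrest : -(((#T : ℝ) - 1) * ε) ≤ ∑ y ∈ T.erase x, w y := by
    have := card_nsmul_le_sum (T.erase x) w (-ε) fun y hy => hlow y (mem_of_mem_erase hy)
    rw [card_erase_of_mem hx, nsmul_eq_mul, Nat.cast_pred (card_pos.mpr ⟨x, hx⟩)] at this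
    linarith
  have := add_sum_erase T w hx
  linarith [hgap x hx hpos]

section LineWeights

variable {α : Type*} [DecidableEq α] {q : ℕ} {S : Finset α} {w : α → ℝ} {x₀ : α}

theorem forall_eq_zero_of_sum_eq_zero_of_isAdmissibleWeight (hq : 0 < q) (hS : #S = q + 1)
    (hw : ∀ x ∈ S, IsAdmissibleWeight q (w x)) (hx₀ : x₀ ∈ S) (hw₀ : w x₀ = 0)
    (hsum : ∑ x ∈ S, w x = 0) : ∀ x ∈ S, w x = 0 := by
  have hT : #(S.erase x₀) = q := by rw [card_erase_of_mem hx₀, hS, Nat.add_sub_cancel]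
  have hgap : ((q : ℝ) - 1) * (1 / (q ^ 2 + q)) < 1 / (q + 1) := by
    rw [show (q : ℝ) ^ 2 + q = q * (q + 1) by ring]
    field_simp
    linarith
  have hzero := forall_eq_zero_of_sum_eq_zero_of_gap (T := S.erase x₀)
    (fun x hx => (hw x (mem_of_mem_erase hx)).neg_le)
    (fun x hx => (hw x (mem_of_mem_erase hx)).le_of_pos hq) (by rwa [hT])
    (by rwa [sum_erase S hw₀])
  intro x hx
  by_cases h : x = x₀
  · rwa [h]
  · exact hzero x (mem_erase.mpr ⟨h, hx⟩)

theorem forall_eq_inv_of_sum_eq_one_of_isAdmissibleWeight (hq : 0 < q) (hS : #S = q + 1)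
    (hw : ∀ x ∈ S, IsAdmissibleWeight q (w x)) (hx₀ : x₀ ∈ S) (hw₀ : w x₀ = 0)
    (hsum : ∑ x ∈ S, w x = 1) : ∀ x ∈ S.erase x₀, w x = 1 / q := by
  have hqR : (q : ℝ) ≠ 0 := by positivity
  refine (sum_eq_sum_iff_of_le fun x hx => (hw x (mem_of_mem_erase hx)).le_inv hq).mp ?_
  rw [sum_erase S hw₀, hsum, sum_const, card_erase_of_mem hx₀, hS, Nat.add_sub_cancel,
    nsmul_eq_mul]
  field_simp

theorem line_weights_of_isAdmissibleWeight (hq : 0 < q) (hS : #S = q + 1)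
    (hw : ∀ x ∈ S, IsAdmissibleWeight q (w x)) (hx₀ : x₀ ∈ S) (hw₀ : w x₀ = 0)
    (hsum : ∑ x ∈ S, w x = 0 ∨ ∑ x ∈ S, w x = 1) :
    (∀ x ∈ S, w x = 0 ∨ w x = 1 / q) ∧ (#{x ∈ S | w x = 0} = 1 ∨ #{x ∈ S | w x = 0} = q + 1) := by
  rcases hsum with hsum | hsum
  · have hzero := forall_eq_zero_of_sum_eq_zero_of_isAdmissibleWeight hq hS hw hx₀ hw₀ hsum
    refine ⟨fun x hx => .inl (hzero x hx), .inr ?_⟩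
    rw [filter_true_of_mem hzero, hS]
  · have hinv := forall_eq_inv_of_sum_eq_one_of_isAdmissibleWeight hq hS hw hx₀ hw₀ hsum
    have hinv_ne : (1 / q : ℝ) ≠ 0 := by positivity
    refine ⟨fun x hx => ?_, .inl ?_⟩
    · by_cases h : x = x₀
      · exact .inl (h ▸ hw₀)
      · exact .inr (hinv x (mem_erase.mpr ⟨h, hx⟩))
    · rw [card_eq_one]
      refine ⟨x₀, eq_singleton_iff_unique_mem.mpr ⟨mem_filter.mpr ⟨hx₀, hw₀⟩, fun x hx => ?_⟩⟩
      by_contra h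
      obtain ⟨hxS, hx0⟩ := mem_filter.mp hx
      exact hinv_ne (hinv x (mem_erase.mpr ⟨h, hxS⟩) ▸ hx0)

end LineWeights

theorem stmt_5_general (q : ℕ) (F V : Type) [Field F] [Fintype F] (hq : Fintype.card F = q)
    [AddCommGroup V] [Module F V]
    (wt : Submodule F V → ℝ)
    (hline : ∀ L : Submodule F V, finrank F L = 2 →
      subWeight wt L = 0 ∨ subWeight wt L = 1)
    (hwts : ∀ P : Submodule F V, finrank F P = 1 →
      wt P = -(1 / (q ^ 2 + q : ℝ)) ∨ wt P = 0 ∨ wt P = 1 / ((q : ℝ) + 1) ∨ wt P = 1 / (q : ℝ))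
    (L : Submodule F V) (hL : finrank F L = 2)
    (P₀ : Submodule F V) (hP₀ : finrank F P₀ = 1) (hP₀L : P₀ ≤ L) (hP₀w : wt P₀ = 0) :
    (∀ P : Submodule F V, finrank F P = 1 → P ≤ L → wt P = 0 ∨ wt P = 1 / (q : ℝ)) ∧
    (Nat.card {P : Submodule F V // finrank F P = 1 ∧ P ≤ L ∧ wt P = 0} = 1 ∨
     Nat.card {P : Submodule F V // finrank F P = 1 ∧ P ≤ L ∧ wt P = 0} = q + 1) := by
  classical
  have hcard := Submodule.nat_card_points_of_finrank_eq_two hL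
  rw [Nat.card_eq_fintype_card (α := F), hq] at hcard
  have : Finite {P : Submodule F V // finrank F P = 1 ∧ P ≤ L} :=
    Nat.finite_of_card_ne_zero (by simp [hcard])
  have hfin : {P : Submodule F V | finrank F P = 1 ∧ P ≤ L}.Finite := Set.finite_coe_iff.mp this
  set S := hfin.toFinset
  have hS : #S = q + 1 := by rw [← Nat.card_eq_card_finite_toFinset, Set.coe_ofPred, hcard]
  have hmem : ∀ {P}, P ∈ S ↔ finrank F P = 1 ∧ P ≤ L := by simp [S]
  obtain ⟨hvalues, hzeros⟩ := line_weights_of_isAdmissibleWeight (q := q) (S := S) (w := wt)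
    (hq ▸ Fintype.card_pos) hS (fun P hP => hwts P (hmem.mp hP).1) (hmem.mpr ⟨hP₀, hP₀L⟩) hP₀w
    (by rw [← finsum_mem_eq_finite_toFinset_sum]; exact hline L hL)
  have hcount : Nat.card {P : Submodule F V // finrank F P = 1 ∧ P ≤ L ∧ wt P = 0} =
      #{P ∈ S | wt P = 0} := by
    rw [← Nat.card_eq_finsetCard]
    exact Nat.card_congr (Equiv.subtypeEquivRight fun P => by simp [hmem, and_assoc])
  exact ⟨fun P hP hPL => hvalues P (hmem.mpr ⟨hP, hPL⟩), hcount ▸ hzeros⟩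

/-- If every line has weight in `{0,1}` and all point weights lie in
`{-1/(q²+q), 0, 1/(q+1), 1/q}`, then a line through a weight-`0` point has all its
points of weight `0` or `1/q` and contains exactly `1` or exactly `q+1` points of
weight `0`. -/
theorem stmt_5 (q n : ℕ) (F V : Type) [Field F] [Fintype F] (hq : Fintype.card F = q)
    [AddCommGroup V] [Module F V] (hn : 2 ≤ n) (hdim : finrank F V = n)
    (wt : Submodule F V → ℝ)
    (hline : ∀ L : Submodule F V, finrank F L = 2 →
      subWeight wt L = 0 ∨ subWeight wt L = 1)
    (hwts : ∀ P : Submodule F V, finrank F P = 1 →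
      wt P = -(1 / (q ^ 2 + q : ℝ)) ∨ wt P = 0 ∨ wt P = 1 / ((q : ℝ) + 1) ∨ wt P = 1 / (q : ℝ))
    (L : Submodule F V) (hL : finrank F L = 2)
    (P₀ : Submodule F V) (hP₀ : finrank F P₀ = 1) (hP₀L : P₀ ≤ L) (hP₀w : wt P₀ = 0) :
    (∀ P : Submodule F V, finrank F P = 1 → P ≤ L → wt P = 0 ∨ wt P = 1 / (q : ℝ)) ∧
    (Nat.card {P : Submodule F V // finrank F P = 1 ∧ P ≤ L ∧ wt P = 0} = 1 ∨
     Nat.card {P : Submodule F V // finrank F P = 1 ∧ P ≤ L ∧ wt P = 0} = q + 1) :=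
  stmt_5_general q F V hq wt hline hwts L hL P₀ hP₀ hP₀L hP₀w
end

section
/- Let wt : points(V) → ℝ on an n-dimensional F_q-vector space V (n ≥ 4) be such that every line has total weight in {0,1}, and suppose every point has weight in {0, 1/q}. Then the set S of points of weight 0 is a (possibly empty or full) subspace, and moreover either all points have weight 0, or S is the set of points of a hyperplane and all points outside have weight 1/q. -/
open Module

/-!
A line has `q + 1` points. If it contains two points of weight `0`, its weight is at most
`(q - 1)/q < 1`, hence `0`, so all its points have weight `0`; and it cannot consist of points
of weight `1/q` only, as it would weigh `(q + 1)/q`. Thus the weight-`0` points are closed under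
joining, so they are the points of a subspace `W`, and every line meets `W`. A proper subspace
meeting every line is a hyperplane.
-/

section Points
variable {F V : Type} [Field F] [AddCommGroup V] [Module F V]

def points (L : Submodule F V) : Set (Submodule F V) := {P | finrank F P = 1 ∧ P ≤ L}

noncomputable def pointsEquivProjectivization (L : Submodule F V) :
    points L ≃ Projectivization F L :=
  calc points L
      ≃ {P : {P : Submodule F V // P ≤ L} // finrank F P.1 = 1} :=
        ((Equiv.subtypeSubtypeEquivSubtypeInter (· ≤ L) _).trans
          (Equiv.subtypeEquivRight fun _ => and_comm)).symm
    _ ≃ {H : Submodule F L // finrank F H = 1} :=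
        ((Submodule.MapSubtype.orderIso L).toEquiv.subtypeEquiv fun H =>
          (Submodule.finrank_map_subtype_eq L H).symm ▸ Iff.rfl).symm
    _ ≃ Projectivization F L := (Projectivization.equivSubmodule F L).symm

theorem ncard_points_mul (L : Submodule F V) :
    (points L).ncard * (Nat.card F - 1) = Nat.card L - 1 := by
  rw [Projectivization.card F L, ← Nat.card_coe_set_eq,
    Nat.card_congr (pointsEquivProjectivization L)]

theorem ncard_points_of_finrank_eq_two [Finite F] {L : Submodule F V} (hL : finrank F L = 2) :
    (points L).ncard = Nat.card F + 1 := by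
  have : Module.Finite F L := Module.finite_of_finrank_eq_succ hL
  have hq : 1 < Nat.card F := Finite.one_lt_card
  have h := ncard_points_mul L
  rw [Module.natCard_eq_pow_finrank (K := F) (V := L), hL] at h
  have h2 : Nat.card F ^ 2 - 1 = (Nat.card F + 1) * (Nat.card F - 1) := by
    rw [← Nat.sq_sub_sq, one_pow]
  exact Nat.eq_of_mul_eq_mul_right (by omega) (h.trans h2)

theorem finrank_sup_eq_two_of_ne {P Q : Submodule F V}
    (hP : finrank F P = 1) (hQ : finrank F Q = 1) (hPQ : P ≠ Q) : finrank F ↥(P ⊔ Q) = 2 := by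
  have : Module.Finite F P := Module.finite_of_finrank_eq_succ hP
  have : Module.Finite F Q := Module.finite_of_finrank_eq_succ hQ
  have hdisj := (Submodule.isAtom_iff_finrank_eq_one.2 hP).disjoint_of_ne
    (Submodule.isAtom_iff_finrank_eq_one.2 hQ) hPQ
  have := Submodule.finrank_sup_add_finrank_inf_eq P Q
  rw [hdisj.eq_bot, finrank_bot, hP, hQ] at this
  omega

theorem exists_line_disjoint_of_finrank_add_two_le [FiniteDimensional F V] {W : Submodule F V}
    (hW : finrank F W + 2 ≤ finrank F V) : ∃ L : Submodule F V, finrank F L = 2 ∧ Disjoint L W := by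
  obtain ⟨v, hv⟩ := W.exists_of_finrank_lt (by omega)
  replace hv : v ∉ W := by simpa using hv 1 one_ne_zero
  have hWv := Submodule.finrank_sup_span_singleton hv
  obtain ⟨u, hu⟩ := (W ⊔ F ∙ v).exists_of_finrank_lt (by omega)
  replace hu : u ∉ W ⊔ F ∙ v := by simpa using hu 1 one_ne_zero
  have hWvu := Submodule.finrank_sup_span_singleton hu
  set L := (F ∙ v) ⊔ (F ∙ u)
  have hL : finrank F L ≤ 2 := calc
    finrank F L ≤ finrank F (F ∙ v) + finrank F (F ∙ u) :=
      Submodule.finrank_add_le_finrank_add_finrank _ _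
    _ ≤ 1 + 1 := by
      gcongr <;> exact (finrank_span_le_card _).trans (by simp)
  have hsup := Submodule.finrank_sup_add_finrank_inf_eq L W
  rw [show L ⊔ W = W ⊔ (F ∙ v) ⊔ (F ∙ u) by ac_rfl, hWvu, hWv] at hsup
  exact ⟨L, by omega, disjoint_iff.2 (Submodule.finrank_eq_zero.1 (by omega))⟩

theorem finrank_eq_sub_one_of_forall_line_not_disjoint [FiniteDimensional F V]
    {W : Submodule F V} (hW : W ≠ ⊤)
    (hline : ∀ L : Submodule F V, finrank F L = 2 → ¬Disjoint L W) :
    finrank F W = finrank F V - 1 := by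
  have := Submodule.finrank_lt hW
  by_contra h
  obtain ⟨L, hL, hdisj⟩ := exists_line_disjoint_of_finrank_add_two_le (W := W) (by omega)
  exact hline L hL hdisj

theorem exists_submodule_iff_le_of_line_closed (Z : Submodule F V → Prop)
    (hZ : ∀ P₁ P₂ : Submodule F V, finrank F P₁ = 1 → finrank F P₂ = 1 → P₁ ≠ P₂ → Z P₁ → Z P₂ →
      ∀ P ∈ points (P₁ ⊔ P₂), Z P) :
    ∃ W : Submodule F V, ∀ P : Submodule F V, finrank F P = 1 → (Z P ↔ P ≤ W) := by
  let W : Submodule F V :=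
    { carrier := {v | v = 0 ∨ Z (F ∙ v)}
      zero_mem' := Or.inl rfl
      add_mem' := by
        intro u v hu hv
        rcases eq_or_ne u 0 with rfl | hu0
        · simpa using hv
        rcases eq_or_ne v 0 with rfl | hv0
        · simpa using hu
        rcases eq_or_ne (u + v) 0 with huv | huv
        · exact Or.inl huv
        have huv_mem : u + v ∈ (F ∙ u) ⊔ (F ∙ v) := Submodule.add_mem_sup
          (Submodule.mem_span_singleton_self u) (Submodule.mem_span_singleton_self v)
        by_cases hspan : F ∙ u = F ∙ v
        · rw [hspan, sup_idem] at huv_mem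
          refine Or.inr ?_
          rw [← eq_span_singleton_of_mem_of_finrank_eq_one (finrank_span_singleton hv0) huv_mem huv]
          exact hv.resolve_left hv0
        · exact Or.inr <| hZ _ _ (finrank_span_singleton hu0) (finrank_span_singleton hv0) hspan
            (hu.resolve_left hu0) (hv.resolve_left hv0) _
            ⟨finrank_span_singleton huv, (Submodule.span_singleton_le_iff_mem _ _).2 huv_mem⟩
      smul_mem' := by
        rintro c v (rfl | hv)
        · exact Or.inl (smul_zero c)
        rcases eq_or_ne c 0 with rfl | hc
        · exact Or.inl (zero_smul F v)
        · exact Or.inr (by rwa [Submodule.span_singleton_smul_eq hc.isUnit]) }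
  refine ⟨W, fun P hP => ⟨fun hZP x hx => ?_, fun hPW => ?_⟩⟩
  · rcases eq_or_ne x 0 with rfl | hx0
    · exact Or.inl rfl
    · exact Or.inr (eq_span_singleton_of_mem_of_finrank_eq_one hP hx hx0 ▸ hZP)
  · obtain ⟨x, hx, hx0⟩ := Submodule.exists_mem_ne_zero_of_ne_bot
      (Submodule.isAtom_iff_finrank_eq_one.2 hP).ne_bot
    rw [eq_span_singleton_of_mem_of_finrank_eq_one hP hx hx0]
    exact (hPW hx).resolve_left hx0

end Points

section Weights
variable {F V : Type} [Field F] [Fintype F] [AddCommGroup V] [Module F V]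
  {wt : Submodule F V → ℝ}

theorem exists_finset_eq_points_of_finrank_eq_two {L : Submodule F V} (hL : finrank F L = 2) :
    ∃ s : Finset (Submodule F V), (∀ P, P ∈ s ↔ P ∈ points L) ∧ s.card = Fintype.card F + 1 := by
  have hcard := ncard_points_of_finrank_eq_two (V := V) hL
  rw [Nat.card_eq_fintype_card] at hcard
  have hfin : (points L).Finite := Set.finite_of_ncard_ne_zero (by omega)
  exact ⟨hfin.toFinset, fun _ => hfin.mem_toFinset,
    by rw [← hcard, Set.ncard_eq_toFinset_card _ hfin]⟩

omit [Fintype F] in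
theorem subWeight_eq_sum {L : Submodule F V} {s : Finset (Submodule F V)}
    (hs : ∀ P, P ∈ s ↔ P ∈ points L) : subWeight wt L = ∑ P ∈ s, wt P := by
  rw [subWeight, ← finsum_mem_coe_finset, Set.ext hs, points]

variable (hwts : ∀ P : Submodule F V, finrank F P = 1 → wt P = 0 ∨ wt P = 1 / (Fintype.card F : ℝ))
include hwts

theorem exists_weight_eq_zero_of_finrank_eq_two {L : Submodule F V} (hL : finrank F L = 2)
    (hline : subWeight wt L = 0 ∨ subWeight wt L = 1) : ∃ P ∈ points L, wt P = 0 := by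
  obtain ⟨s, hs, hcard⟩ := exists_finset_eq_points_of_finrank_eq_two (V := V) hL
  by_contra! hne
  have hall : ∀ P ∈ s, wt P = 1 / (Fintype.card F : ℝ) := fun P hP =>
    have hP' := (hs P).1 hP
    (hwts P hP'.1).resolve_left (hne P hP')
  have hsum : subWeight wt L = 1 + 1 / (Fintype.card F : ℝ) := by
    rw [subWeight_eq_sum hs, Finset.sum_congr rfl hall, Finset.sum_const, hcard, nsmul_eq_mul]
    field_simp
    push_cast
    ring
  have : 0 < 1 / (Fintype.card F : ℝ) := by positivity
  rcases hline with h | h <;> linarith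

theorem weight_nonneg {P : Submodule F V} (hP : finrank F P = 1) : 0 ≤ wt P := by
  rcases hwts P hP with h | h <;> rw [h]; positivity

theorem weight_le {P : Submodule F V} (hP : finrank F P = 1) :
    wt P ≤ 1 / (Fintype.card F : ℝ) := by
  rcases hwts P hP with h | h <;> rw [h]
  positivity

theorem weight_eq_zero_of_mem_points_sup {P₁ P₂ : Submodule F V} (hP₁ : finrank F P₁ = 1)
    (hP₂ : finrank F P₂ = 1) (hne : P₁ ≠ P₂) (hw₁ : wt P₁ = 0) (hw₂ : wt P₂ = 0)
    (hline : subWeight wt (P₁ ⊔ P₂) = 0 ∨ subWeight wt (P₁ ⊔ P₂) = 1) :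
    ∀ P ∈ points (P₁ ⊔ P₂), wt P = 0 := by
  obtain ⟨s, hs, hcard⟩ :=
    exists_finset_eq_points_of_finrank_eq_two (finrank_sup_eq_two_of_ne hP₁ hP₂ hne)
  have h₁ : P₁ ∈ s := (hs P₁).2 ⟨hP₁, le_sup_left⟩
  have h₂ : P₂ ∈ s.erase P₁ := Finset.mem_erase.2 ⟨hne.symm, (hs P₂).2 ⟨hP₂, le_sup_right⟩⟩
  have hpoint : ∀ P ∈ s, finrank F P = 1 := fun P hP => ((hs P).1 hP).1
  have hlt : subWeight wt (P₁ ⊔ P₂) < 1 := calc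
    subWeight wt (P₁ ⊔ P₂) = ∑ P ∈ (s.erase P₁).erase P₂, wt P := by
      rw [subWeight_eq_sum hs, ← Finset.sum_erase _ hw₁, ← Finset.sum_erase _ hw₂]
    _ ≤ ((s.erase P₁).erase P₂).card • (1 / (Fintype.card F : ℝ)) :=
      Finset.sum_le_card_nsmul _ _ _ fun P hP =>
        weight_le hwts (hpoint P (Finset.mem_of_mem_erase (Finset.mem_of_mem_erase hP)))
    _ = 1 - 1 / (Fintype.card F : ℝ) := by
      rw [Finset.card_erase_of_mem h₂, Finset.card_erase_of_mem h₁, hcard, Nat.add_sub_cancel,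
        nsmul_eq_mul, Nat.cast_pred Fintype.card_pos]
      field_simp
    _ < 1 := by linarith [show 0 < 1 / (Fintype.card F : ℝ) by positivity]
  have hzero : ∑ P ∈ s, wt P = 0 := by
    rw [← subWeight_eq_sum hs]
    exact hline.resolve_right hlt.ne
  intro P hP
  exact (Finset.sum_eq_zero_iff_of_nonneg fun P hP => weight_nonneg hwts (hpoint P hP)).1 hzero P
    ((hs P).2 hP)

end Weights

/-- If every line has weight in `{0,1}` and every point has weight `0` or `1/q`
(`n ≥ 4`), then the weight-`0` points form a subspace, and either all points have
weight `0`, or the weight-`0` points are exactly the points of a hyperplane and all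
other points have weight `1/q`. -/
theorem stmt_7 (q n : ℕ) (F V : Type) [Field F] [Fintype F] (hq : Fintype.card F = q)
    [AddCommGroup V] [Module F V] (hn : 4 ≤ n) (hdim : finrank F V = n)
    (wt : Submodule F V → ℝ)
    (hline : ∀ L : Submodule F V, finrank F L = 2 →
      subWeight wt L = 0 ∨ subWeight wt L = 1)
    (hwts : ∀ P : Submodule F V, finrank F P = 1 → wt P = 0 ∨ wt P = 1 / (q : ℝ)) :
    (∃ W : Submodule F V, ∀ P : Submodule F V, finrank F P = 1 → (wt P = 0 ↔ P ≤ W)) ∧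
    ((∀ P : Submodule F V, finrank F P = 1 → wt P = 0) ∨
      ∃ H : Submodule F V, finrank F H = n - 1 ∧
        ∀ P : Submodule F V, finrank F P = 1 →
          (P ≤ H → wt P = 0) ∧ (¬ P ≤ H → wt P = 1 / (q : ℝ))) := by
  subst hq
  have : FiniteDimensional F V := Module.finite_of_finrank_pos (by omega)
  obtain ⟨W, hW⟩ := exists_submodule_iff_le_of_line_closed (fun P => wt P = 0)
    fun P₁ P₂ hP₁ hP₂ hne hw₁ hw₂ => weight_eq_zero_of_mem_points_sup hwts hP₁ hP₂ hne hw₁ hw₂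
      (hline _ (finrank_sup_eq_two_of_ne hP₁ hP₂ hne))
  refine ⟨⟨W, hW⟩, or_iff_not_imp_left.2 fun hall => ?_⟩
  obtain ⟨P₀, hP₀, hw₀⟩ := not_forall₂.1 hall
  have hWtop : W ≠ ⊤ := fun h => hw₀ ((hW P₀ hP₀).2 (h ▸ le_top))
  have hmeet : ∀ L : Submodule F V, finrank F L = 2 → ¬Disjoint L W := fun L hL hdisj => by
    obtain ⟨P, ⟨hP, hPL⟩, hwP⟩ := exists_weight_eq_zero_of_finrank_eq_two hwts hL (hline L hL)
    exact (Submodule.isAtom_iff_finrank_eq_one.2 hP).ne_bot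
      (disjoint_self.1 (hdisj.mono hPL ((hW P hP).1 hwP)))
  exact ⟨W, hdim ▸ finrank_eq_sub_one_of_forall_line_not_disjoint hWtop hmeet, fun P hP =>
    ⟨(hW P hP).2, fun hPW => (hwts P hP).resolve_left (mt (hW P hP).1 hPW)⟩⟩
end

section
/- Let wt : points(V) → ℝ on an n-dimensional F_q-vector space (n ≥ 4) with every line-weight in {0,1}. If every point weight lies in {-1/(q²+q), 0, 1/(q+1), 1/q}, then the corresponding family Y of weight-1 lines is trivial: it is one of ∅, all lines, the lines in a hyperplane, the lines through a point, a point-pencil union hyperplane lines, or a complement of these. -/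
open Module

/-- The set of all lines (2-spaces). -/
def allLines (F V : Type) [Field F] [AddCommGroup V] [Module F V] : Set (Submodule F V) :=
  {L | finrank F L = 2}

/-- The point-pencil of a point `P`: all lines through `P`. -/
def pencil {F V : Type} [Field F] [AddCommGroup V] [Module F V] (P : Submodule F V) :
    Set (Submodule F V) :=
  {L | finrank F L = 2 ∧ P ≤ L}

/-- The lines contained in a subspace `H`. -/
def linesIn {F V : Type} [Field F] [AddCommGroup V] [Module F V] (H : Submodule F V) :
    Set (Submodule F V) :=
  {L | finrank F L = 2 ∧ L ≤ H}

/-- The trivial examples of Boolean degree 1 functions on lines: `∅`, a point-pencil,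
the lines of a hyperplane, the union of a point-pencil and the lines of a hyperplane
not containing the point, and complements (within all lines) of these. -/
def IsTrivialCL {F V : Type} [Field F] [AddCommGroup V] [Module F V]
    (Y : Set (Submodule F V)) : Prop :=
  ∃ Z : Set (Submodule F V),
    (Z = ∅ ∨
     (∃ P : Submodule F V, finrank F P = 1 ∧ Z = pencil P) ∨
     (∃ H : Submodule F V, finrank F H = finrank F V - 1 ∧ Z = linesIn H) ∨
     (∃ P H : Submodule F V, finrank F P = 1 ∧ finrank F H = finrank F V - 1 ∧
        ¬ P ≤ H ∧ Z = pencil P ∪ linesIn H)) ∧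
    (Y = Z ∨ Y = allLines F V \ Z)

/-!
A line of weight 0 or 1 carries one of only four weight patterns: all points 0; one point
`1/(q+1)` and `q` points `-1/(q²+q)`; all points `1/(q+1)`; one point 0 and `q` points `1/q`.
If some point `A` has weight `1/q`, every line through `A` has the last pattern, so all weights are
0 or `1/q`, and the points of weight 0 form a set closed under joining that meets every line
through `A`: they are the points of a hyperplane `H`, and `Y` consists of the lines not in `H`.
Replacing `wt` by `1/(q+1) - wt` permutes the admissible weights and replaces `Y` by its
complement; it turns a point of weight `-1/(q²+q)` into one of weight `1/q`. If neither of these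
two weights occurs, no line carries both a point of weight 0 and one of weight `1/(q+1)`, so `wt`
is constant and `Y` is empty or consists of all lines.
-/

open Finset
open scoped LinearAlgebra.Projectivization

namespace CameronLiebler

section Geometry

variable {F V : Type*} [Field F] [AddCommGroup V] [Module F V]

def points (W : Submodule F V) : Set (Submodule F V) := {P | finrank F P = 1 ∧ P ≤ W}

lemma finrank_inf_lt_one {P X : Submodule F V} (hP : finrank F P = 1) (hPX : ¬ P ≤ X) :
    finrank F ↥(P ⊓ X) < 1 :=
  have : FiniteDimensional F P := Module.finite_of_finrank_eq_succ hP
  hP ▸ Submodule.finrank_lt_finrank_of_lt (inf_le_left.lt_of_ne fun h => hPX (h ▸ inf_le_right))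

lemma finrank_sup_eq_two {P Q : Submodule F V} (hP : finrank F P = 1) (hQ : finrank F Q = 1)
    (hPQ : P ≠ Q) : finrank F ↥(P ⊔ Q) = 2 := by
  have : FiniteDimensional F P := Module.finite_of_finrank_eq_succ hP
  have : FiniteDimensional F Q := Module.finite_of_finrank_eq_succ hQ
  have hinf :=
    finrank_inf_lt_one hP fun h => hPQ (Submodule.eq_of_le_of_finrank_eq h (hP ▸ hQ.symm))
  have := Submodule.finrank_sup_add_finrank_inf_eq P Q
  omega

lemma points_eq_range (W : Submodule F V) :
    points W = Set.range fun p : ℙ F W => p.submodule.map W.subtype := by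
  ext P
  constructor
  · rintro ⟨hP, hPW⟩
    have hP' : finrank F (P.comap W.subtype) = 1 := by
      rw [← hP]; exact (Submodule.comapSubtypeEquivOfLe hPW).finrank_eq
    refine ⟨Projectivization.mk'' _ hP', ?_⟩
    simp [Projectivization.submodule_mk'', Submodule.map_comap_subtype, inf_eq_right.2 hPW]
  · rintro ⟨p, rfl⟩
    exact ⟨by rw [Submodule.finrank_map_subtype_eq, p.finrank_submodule],
      Submodule.map_subtype_le _ _⟩

lemma ncard_points [Finite F] {L : Submodule F V} (hL : finrank F L = 2) :
    (points L).ncard = Nat.card F + 1 := by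
  rw [points_eq_range, Set.ncard_range_of_injective fun p₁ p₂ h =>
    Projectivization.submodule_injective (Submodule.map_injective_of_injective
      L.injective_subtype h), Projectivization.card_of_finrank_two F L hL]

lemma finite_points [Finite F] {L : Submodule F V} (hL : finrank F L = 2) :
    (points L).Finite :=
  Set.finite_of_ncard_pos (by rw [ncard_points hL]; omega)

lemma finrank_eq_finrank_sub_one_of_sup_eq_top {P H : Submodule F V} (hP : finrank F P = 1)
    (hPH : ¬ P ≤ H) (hsup : P ⊔ H = ⊤) : finrank F H = finrank F V - 1 := by
  have : FiniteDimensional F P := Module.finite_of_finrank_eq_succ hP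
  by_cases hH : FiniteDimensional F H
  · have hinf := finrank_inf_lt_one hP hPH
    have := Submodule.finrank_sup_add_finrank_inf_eq P H
    rw [hsup, finrank_top] at this
    omega
  · have hV : ¬ FiniteDimensional F V := fun _ => hH inferInstance
    rw [Module.finrank_of_not_finite hH, Module.finrank_of_not_finite hV]

def IsJoinClosed (S : Set (Submodule F V)) : Prop :=
  ∀ P ∈ S, ∀ Q ∈ S, P ≠ Q → points (P ⊔ Q) ⊆ S

lemma IsJoinClosed.add_mem {S : Set (Submodule F V)} (hS : IsJoinClosed S) {a b : V}
    (ha : a = 0 ∨ (F ∙ a) ∈ S) (hb : b = 0 ∨ (F ∙ b) ∈ S) : a + b = 0 ∨ (F ∙ (a + b)) ∈ S := by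
  obtain rfl | ha0 := eq_or_ne a 0
  · simpa using hb
  obtain rfl | hb0 := eq_or_ne b 0
  · simpa using ha
  replace ha := ha.resolve_left ha0
  replace hb := hb.resolve_left hb0
  refine or_iff_not_imp_left.2 fun hab => ?_
  by_cases hspan : (F ∙ a) = F ∙ b
  · have hmem : a + b ∈ F ∙ a := Submodule.add_mem _ (Submodule.mem_span_singleton_self a)
      (hspan ▸ Submodule.mem_span_singleton_self b)
    rwa [← eq_span_singleton_of_mem_of_finrank_eq_one (finrank_span_singleton ha0) hmem hab]
  · refine hS _ ha _ hb hspan ⟨finrank_span_singleton hab, ?_⟩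
    rw [Submodule.span_singleton_le_iff_mem]
    exact Submodule.add_mem_sup (Submodule.mem_span_singleton_self a)
      (Submodule.mem_span_singleton_self b)

def IsJoinClosed.submodule {S : Set (Submodule F V)} (hS : IsJoinClosed S) : Submodule F V where
  carrier := {v | v = 0 ∨ (F ∙ v) ∈ S}
  zero_mem' := Or.inl rfl
  add_mem' := hS.add_mem
  smul_mem' := by
    rintro c v (rfl | hv)
    · exact Or.inl (smul_zero c)
    obtain rfl | hc := eq_or_ne c 0
    · exact Or.inl (zero_smul F v)
    · exact Or.inr (by rwa [Submodule.span_singleton_smul_eq (IsUnit.mk0 c hc)])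

lemma IsJoinClosed.le_submodule_iff {S : Set (Submodule F V)} (hS : IsJoinClosed S)
    {Q : Submodule F V} (hQ : finrank F Q = 1) : Q ≤ hS.submodule ↔ Q ∈ S := by
  obtain ⟨v, hvQ, hv0⟩ := (Submodule.ne_bot_iff Q).1 fun h => by
    rw [h, finrank_bot] at hQ; exact zero_ne_one hQ
  rw [eq_span_singleton_of_mem_of_finrank_eq_one hQ hvQ hv0, Submodule.span_singleton_le_iff_mem]
  exact or_iff_right hv0

/-- The hyperplane is a complement of `P₀`: every point `Q ≠ P₀` lies on the line `P₀ ⊔ R` for the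
point `R ∈ S` where that line meets `S`. -/
lemma IsJoinClosed.exists_hyperplane {S : Set (Submodule F V)} (hS : IsJoinClosed S)
    {P₀ : Submodule F V} (hP₀ : finrank F P₀ = 1) (hP₀S : P₀ ∉ S)
    (hmeet : ∀ L : Submodule F V, finrank F L = 2 → P₀ ≤ L → ∃ R ∈ points L, R ∈ S) :
    ∃ H : Submodule F V, finrank F H = finrank F V - 1 ∧
      ∀ Q : Submodule F V, finrank F Q = 1 → (Q ≤ H ↔ Q ∈ S) := by
  refine ⟨hS.submodule, ?_, fun Q hQ => hS.le_submodule_iff hQ⟩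
  refine finrank_eq_finrank_sub_one_of_sup_eq_top hP₀
    (fun h => hP₀S ((hS.le_submodule_iff hP₀).1 h)) (eq_top_iff.2 fun v _ => ?_)
  by_cases hvH : v ∈ hS.submodule
  · exact Submodule.mem_sup_right hvH
  have hv0 : v ≠ 0 := fun h => hvH (Or.inl h)
  have hQ : finrank F (F ∙ v) = 1 := finrank_span_singleton hv0
  by_cases hQP : (F ∙ v) = P₀
  · exact Submodule.mem_sup_left (hQP ▸ Submodule.mem_span_singleton_self v)
  have hL := finrank_sup_eq_two hP₀ hQ (Ne.symm hQP)
  obtain ⟨R, ⟨hR, hRL⟩, hRS⟩ := hmeet _ hL le_sup_left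
  have : FiniteDimensional F ↥(P₀ ⊔ F ∙ v) := Module.finite_of_finrank_pos (by omega)
  have hLR : P₀ ⊔ R = P₀ ⊔ (F ∙ v) :=
    Submodule.eq_of_le_of_finrank_le (sup_le le_sup_left hRL)
      (by rw [hL, finrank_sup_eq_two hP₀ hR fun h => hP₀S (h ▸ hRS)])
  have hvL : v ∈ P₀ ⊔ R := hLR ▸ Submodule.mem_sup_right (Submodule.mem_span_singleton_self v)
  exact sup_le_sup_left ((hS.le_submodule_iff hR).2 hRS) P₀ hvL

lemma exists_point_le_not_le {L H : Submodule F V} (h : ¬ L ≤ H) :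
    ∃ Q ∈ points L, ¬ Q ≤ H := by
  obtain ⟨v, hvL, hvH⟩ := SetLike.not_le_iff_exists.1 h
  have hv0 : v ≠ 0 := fun h => hvH (h ▸ H.zero_mem)
  exact ⟨F ∙ v, ⟨finrank_span_singleton hv0, (Submodule.span_singleton_le_iff_mem _ _).2 hvL⟩,
    fun hle => hvH (hle (Submodule.mem_span_singleton_self v))⟩

end Geometry

lemma isTrivialCL_of_isTrivialCL_compl {F V : Type} [Field F] [AddCommGroup V] [Module F V]
    {Y : Set (Submodule F V)} (hY : Y ⊆ allLines F V) (h : IsTrivialCL (allLines F V \ Y)) :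
    IsTrivialCL Y := by
  obtain ⟨Z, hZ, hYZ⟩ := h
  have hZlines : Z ⊆ allLines F V := by
    rcases hZ with rfl | ⟨P, -, rfl⟩ | ⟨H, -, rfl⟩ | ⟨P, H, -, -, -, rfl⟩
    · exact Set.empty_subset _
    · exact fun L hL => hL.1
    · exact fun L hL => hL.1
    · exact Set.union_subset (fun L hL => hL.1) fun L hL => hL.1
  refine ⟨Z, hZ, ?_⟩
  rw [← Set.sdiff_sdiff_cancel_left hY]
  rcases hYZ with hYZ | hYZ
  · exact Or.inr (by rw [hYZ])
  · exact Or.inl (by rw [hYZ, Set.sdiff_sdiff_cancel_left hZlines])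

def IsAdmissibleWeight (q : ℕ) (x : ℝ) : Prop :=
  x = -(1 / (q ^ 2 + q : ℝ)) ∨ x = 0 ∨ x = 1 / ((q : ℝ) + 1) ∨ x = 1 / (q : ℝ)

/-- `a, b, c, d` count the points of weight `1/q, 1/(q+1), 0, -1/(q²+q)` on a line, and `hsum`
says that the line has weight 0 or 1, after multiplication by `q(q+1)`. -/
lemma admissible_counts_cases {q a b c d : ℕ} (hq : 0 < q) (hcard : a + b + c + d = q + 1)
    (hsum : a * (q + 1) + b * q = d ∨ a * (q + 1) + b * q = q * (q + 1) + d) :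
    (a = 0 ∧ b = 0 ∧ c = q + 1 ∧ d = 0) ∨ (a = 0 ∧ b = 1 ∧ c = 0 ∧ d = q) ∨
      (a = 0 ∧ b = q + 1 ∧ c = 0 ∧ d = 0) ∨ (a = q ∧ b = 0 ∧ c = 1 ∧ d = 0) := by
  rcases hsum with h | h
  · have key : a * (q + 2) + b * (q + 1) + c = q + 1 := by linarith
    obtain rfl : a = 0 := by nlinarith
    have hb : b ≤ 1 := by nlinarith
    interval_cases b <;> omega
  · have key : a = q * c + (q + 1) * d := by linarith [congrArg (q * ·) hcard]
    obtain rfl : d = 0 := by nlinarith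
    have hc : c ≤ 1 := by nlinarith
    interval_cases c <;> omega

lemma sum_comp_eq_of_isAdmissibleWeight {ι : Type*} {q : ℕ} (hq : 0 < q) {S : Finset ι}
    {w : ι → ℝ} (hw : ∀ i ∈ S, IsAdmissibleWeight q (w i)) (g : ℝ → ℝ) :
    ∑ i ∈ S, g (w i) = #{i ∈ S | w i = 1 / q} * g (1 / q) +
      #{i ∈ S | w i = 1 / (q + 1)} * g (1 / (q + 1)) + #{i ∈ S | w i = 0} * g 0 +
      #{i ∈ S | w i = -(1 / (q ^ 2 + q))} * g (-(1 / (q ^ 2 + q))) := by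
  have hq' : (0 : ℝ) < q := by exact_mod_cast hq
  have h1 : (1 / (q + 1) : ℝ) < 1 / q := one_div_lt_one_div_of_lt hq' (by linarith)
  have h2 : (0 : ℝ) < 1 / (q + 1) := by positivity
  have h3 : -(1 / (q ^ 2 + q) : ℝ) < 0 := by simp only [neg_lt_zero]; positivity
  have hfiber (x : ℝ) : ∑ i ∈ S with w i = x, g (w i) = #{i ∈ S | w i = x} * g x := by
    rw [sum_congr rfl fun i hi => congrArg g (mem_filter.1 hi).2, sum_const, nsmul_eq_mul]
  rw [← sum_fiberwise_of_maps_to (g := w)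
    (t := {1 / (q : ℝ), 1 / ((q : ℝ) + 1), 0, -(1 / ((q : ℝ) ^ 2 + q))}) fun i hi => by
      rcases hw i hi with h | h | h | h <;> simp [h]]
  rw [sum_insert (by simp only [mem_insert, mem_singleton]; rintro (h | h | h) <;> linarith),
    sum_insert (by simp only [mem_insert, mem_singleton]; rintro (h | h) <;> linarith),
    sum_insert (by simp only [mem_singleton]; intro h; linarith), sum_singleton]
  simp only [hfiber]
  ring

structure IsAdmissibleLine {ι : Type*} (q : ℕ) (S : Finset ι) (w : ι → ℝ) : Prop where
  card_eq : #S = q + 1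
  isAdmissibleWeight : ∀ i ∈ S, IsAdmissibleWeight q (w i)
  sum_eq : ∑ i ∈ S, w i = 0 ∨ ∑ i ∈ S, w i = 1

namespace IsAdmissibleLine

variable {ι : Type*} {q : ℕ} {S : Finset ι} {w : ι → ℝ}

lemma card_filter_cases (hq : 0 < q) (h : IsAdmissibleLine q S w) :
    let a := #{i ∈ S | w i = 1 / q}
    let b := #{i ∈ S | w i = 1 / (q + 1)}
    let c := #{i ∈ S | w i = 0}
    let d := #{i ∈ S | w i = -(1 / (q ^ 2 + q))}
    (a = 0 ∧ b = 0 ∧ c = q + 1 ∧ d = 0) ∨ (a = 0 ∧ b = 1 ∧ c = 0 ∧ d = q) ∨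
      (a = 0 ∧ b = q + 1 ∧ c = 0 ∧ d = 0) ∨ (a = q ∧ b = 0 ∧ c = 1 ∧ d = 0) := by
  intro a b c d
  have hone : ∑ _i ∈ S, (1 : ℝ) = a * 1 + b * 1 + c * 1 + d * 1 :=
    sum_comp_eq_of_isAdmissibleWeight hq h.isAdmissibleWeight fun _ => 1
  have hid : ∑ i ∈ S, w i = a * (1 / q) + b * (1 / (q + 1)) + c * 0 + d * -(1 / (q ^ 2 + q)) :=
    sum_comp_eq_of_isAdmissibleWeight hq h.isAdmissibleWeight id
  rw [sum_const, h.card_eq, nsmul_one, Nat.cast_add_one] at hone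
  refine admissible_counts_cases hq
    (by exact_mod_cast (by linarith : (a + b + c + d : ℝ) = q + 1)) ?_
  rcases hid ▸ h.sum_eq with h | h <;> field_simp at h
  · exact Or.inl (by exact_mod_cast (by linarith : (a * (q + 1) + b * q : ℝ) = d))
  · exact Or.inr (by exact_mod_cast (by linarith : (a * (q + 1) + b * q : ℝ) = q * (q + 1) + d))

lemma sum_eq_one_and_weights_of_eq_inv (hq : 0 < q) (h : IsAdmissibleLine q S w)
    {i : ι} (hi : i ∈ S) (hwi : w i = 1 / q) :
    ∑ j ∈ S, w j = 1 ∧ (∀ j ∈ S, w j = 0 ∨ w j = 1 / q) ∧ ∃ j ∈ S, w j = 0 := by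
  have hpos : 0 < #{j ∈ S | w j = 1 / q} := card_pos.2 ⟨i, mem_filter.2 ⟨hi, hwi⟩⟩
  obtain ⟨ha, hb, hc, hd⟩ : #{j ∈ S | w j = 1 / q} = q ∧ #{j ∈ S | w j = 1 / (q + 1)} = 0 ∧
      #{j ∈ S | w j = 0} = 1 ∧ #{j ∈ S | w j = -(1 / (q ^ 2 + q))} = 0 := by
    rcases h.card_filter_cases hq with h | h | h | h <;> omega
  have hq' : (q : ℝ) ≠ 0 := by positivity
  refine ⟨?_, fun j hj => ?_, ?_⟩
  · refine (sum_comp_eq_of_isAdmissibleWeight hq h.isAdmissibleWeight id).trans ?_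
    rw [ha, hb, hc, hd]
    simp [hq']
  · rcases h.isAdmissibleWeight j hj with h | h | h | h
    · exact absurd h (card_filter_eq_zero_iff.1 hd j hj)
    · exact Or.inl h
    · exact absurd h (card_filter_eq_zero_iff.1 hb j hj)
    · exact Or.inr h
  · obtain ⟨j, hj⟩ := card_pos.1 (hc ▸ one_pos)
    exact ⟨j, (mem_filter.1 hj).1, (mem_filter.1 hj).2⟩

lemma forall_eq_zero_of_two_eq_zero (hq : 0 < q) (h : IsAdmissibleLine q S w)
    {i j : ι} (hi : i ∈ S) (hj : j ∈ S) (hij : i ≠ j) (hwi : w i = 0) (hwj : w j = 0) :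
    ∀ k ∈ S, w k = 0 := by
  have h2 : 1 < #{k ∈ S | w k = 0} :=
    one_lt_card.2 ⟨i, mem_filter.2 ⟨hi, hwi⟩, j, mem_filter.2 ⟨hj, hwj⟩, hij⟩
  have hS := h.card_eq
  have hc : #{k ∈ S | w k = 0} = #S := by
    rcases h.card_filter_cases hq with h' | h' | h' | h' <;> omega
  exact filter_card_eq hc

lemma false_of_eq_zero_of_eq_inv_succ (hq : 0 < q) (h : IsAdmissibleLine q S w)
    {i j : ι} (hi : i ∈ S) (hj : j ∈ S) (hwi : w i = 0) (hwj : w j = 1 / (q + 1)) : False := by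
  have hc : 0 < #{k ∈ S | w k = 0} := card_pos.2 ⟨i, mem_filter.2 ⟨hi, hwi⟩⟩
  have hb : 0 < #{k ∈ S | w k = 1 / (q + 1)} := card_pos.2 ⟨j, mem_filter.2 ⟨hj, hwj⟩⟩
  have hS := h.card_eq
  rcases h.card_filter_cases hq with h | h | h | h <;> omega

end IsAdmissibleLine

lemma one_div_succ_add_one_div_sq_add {q : ℕ} (hq : 0 < q) :
    1 / ((q : ℝ) + 1) + 1 / ((q : ℝ) ^ 2 + q) = 1 / q := by
  have : (q : ℝ) ≠ 0 := by positivity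
  field_simp

lemma IsAdmissibleWeight.one_div_succ_sub {q : ℕ} (hq : 0 < q) {x : ℝ}
    (hx : IsAdmissibleWeight q x) : IsAdmissibleWeight q (1 / ((q : ℝ) + 1) - x) := by
  have h := one_div_succ_add_one_div_sq_add hq
  rcases hx with rfl | rfl | rfl | rfl
  · exact Or.inr (Or.inr (Or.inr (by linarith)))
  · exact Or.inr (Or.inr (Or.inl (sub_zero _)))
  · exact Or.inr (Or.inl (sub_self _))
  · exact Or.inl (by linarith)

section Weighting

variable {F V : Type} [Field F] [AddCommGroup V] [Module F V]

open scoped Classical in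
structure IsAdmissibleWeighting (q : ℕ) (wt : Submodule F V → ℝ) (Y : Set (Submodule F V)) :
    Prop where
  subWeight_eq : ∀ L : Submodule F V, finrank F L = 2 → subWeight wt L = if L ∈ Y then 1 else 0
  isAdmissibleWeight : ∀ P : Submodule F V, finrank F P = 1 → IsAdmissibleWeight q (wt P)

lemma subWeight_eq_sum [Finite F] (wt : Submodule F V → ℝ) {L : Submodule F V}
    (hL : finrank F L = 2) :
    subWeight wt L = ∑ P ∈ (finite_points hL).toFinset, wt P :=
  finsum_mem_eq_finite_toFinset_sum _ _

namespace IsAdmissibleWeighting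

variable {q : ℕ} {wt : Submodule F V → ℝ} {Y : Set (Submodule F V)}

lemma mem_iff (hW : IsAdmissibleWeighting q wt Y) {L : Submodule F V} (hL : finrank F L = 2) :
    L ∈ Y ↔ subWeight wt L = 1 := by
  rw [hW.subWeight_eq L hL]
  split_ifs with h <;> simp [h]

lemma isAdmissibleLine [Fintype F] (hW : IsAdmissibleWeighting q wt Y) (hq : Fintype.card F = q)
    {L : Submodule F V} (hL : finrank F L = 2) :
    IsAdmissibleLine q (finite_points hL).toFinset wt where
  card_eq := by
    rw [← Set.ncard_eq_toFinset_card _ (finite_points hL), ncard_points hL,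
      Nat.card_eq_fintype_card, hq]
  isAdmissibleWeight P hP := hW.isAdmissibleWeight P ((Set.Finite.mem_toFinset _).1 hP).1
  sum_eq := by
    rw [← subWeight_eq_sum wt hL, hW.subWeight_eq L hL]
    split_ifs <;> simp

/-- The constant weight `1/(q+1)` gives every line weight 1, so `1/(q+1) - wt` gives the line `L`
the weight `1 - subWeight wt L`. -/
lemma dual [Fintype F] (hW : IsAdmissibleWeighting q wt Y) (hq : Fintype.card F = q) :
    IsAdmissibleWeighting q (fun P => 1 / ((q : ℝ) + 1) - wt P) (allLines F V \ Y) where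
  subWeight_eq L hL := by
    have hS := (hW.isAdmissibleLine hq hL).card_eq
    have : ((q : ℝ) + 1) ≠ 0 := by positivity
    rw [subWeight_eq_sum _ hL, sum_sub_distrib, ← subWeight_eq_sum wt hL, hW.subWeight_eq L hL,
      sum_const, hS, nsmul_eq_mul]
    by_cases h : L ∈ Y <;> simp [h, allLines, hL, this]
  isAdmissibleWeight P hP :=
    (hW.isAdmissibleWeight P hP).one_div_succ_sub (hq ▸ Fintype.card_pos)

lemma mem_and_weights_of_weight_eq_inv [Fintype F] (hW : IsAdmissibleWeighting q wt Y)
    (hq : Fintype.card F = q) {L : Submodule F V} (hL : finrank F L = 2) {P : Submodule F V}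
    (hP : P ∈ points L) (hwP : wt P = 1 / q) :
    L ∈ Y ∧ (∀ Q ∈ points L, wt Q = 0 ∨ wt Q = 1 / q) ∧ ∃ Q ∈ points L, wt Q = 0 := by
  obtain ⟨hsum, hvals, hzero⟩ := (hW.isAdmissibleLine hq hL).sum_eq_one_and_weights_of_eq_inv
    (hq ▸ Fintype.card_pos) ((finite_points hL).mem_toFinset.2 hP) hwP
  simp only [Set.Finite.mem_toFinset] at hvals hzero
  exact ⟨(hW.mem_iff hL).2 (subWeight_eq_sum wt hL ▸ hsum), hvals, hzero⟩

lemma weight_eq_zero_of_le_sup [Fintype F] (hW : IsAdmissibleWeighting q wt Y)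
    (hq : Fintype.card F = q) {P Q : Submodule F V} (hP : finrank F P = 1) (hQ : finrank F Q = 1)
    (hPQ : P ≠ Q) (hwP : wt P = 0) (hwQ : wt Q = 0) : ∀ R ∈ points (P ⊔ Q), wt R = 0 := by
  have hL := finrank_sup_eq_two hP hQ hPQ
  have hmem {R : Submodule F V} (hR : finrank F R = 1) (hRL : R ≤ P ⊔ Q) :
      R ∈ (finite_points hL).toFinset := (finite_points hL).mem_toFinset.2 ⟨hR, hRL⟩
  exact fun R hR => (hW.isAdmissibleLine hq hL).forall_eq_zero_of_two_eq_zero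
    (hq ▸ Fintype.card_pos) (hmem hP le_sup_left) (hmem hQ le_sup_right) hPQ hwP hwQ R
    (hmem hR.1 hR.2)

lemma false_of_weight_eq_zero_of_weight_eq_inv_succ [Fintype F]
    (hW : IsAdmissibleWeighting q wt Y) (hq : Fintype.card F = q) {P Q : Submodule F V}
    (hP : finrank F P = 1) (hQ : finrank F Q = 1) (hwP : wt P = 0) (hwQ : wt Q = 1 / (q + 1)) :
    False := by
  have hPQ : P ≠ Q := by
    rintro rfl
    have : (0 : ℝ) < 1 / (q + 1) := by positivity
    linarith
  have hL := finrank_sup_eq_two hP hQ hPQ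
  exact (hW.isAdmissibleLine hq hL).false_of_eq_zero_of_eq_inv_succ (hq ▸ Fintype.card_pos)
    ((finite_points hL).mem_toFinset.2 ⟨hP, le_sup_left⟩)
    ((finite_points hL).mem_toFinset.2 ⟨hQ, le_sup_right⟩) hwP hwQ

lemma notMem_of_forall_weight_eq_zero (hW : IsAdmissibleWeighting q wt Y) {L : Submodule F V}
    (hL : finrank F L = 2) (h : ∀ P ∈ points L, wt P = 0) : L ∉ Y := fun hLY =>
  one_ne_zero <| ((hW.mem_iff hL).1 hLY).symm.trans (finsum_mem_of_eqOn_zero h)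

lemma isTrivialCL_of_forall_weight_eq_zero (hW : IsAdmissibleWeighting q wt Y)
    (hY : Y ⊆ allLines F V) (h : ∀ P : Submodule F V, finrank F P = 1 → wt P = 0) :
    IsTrivialCL Y :=
  ⟨∅, Or.inl rfl, Or.inl (Set.eq_empty_of_forall_notMem fun _ hLY =>
    hW.notMem_of_forall_weight_eq_zero (hY hLY) (fun P hP => h P hP.1) hLY)⟩

lemma isTrivialCL_of_weight_eq_inv [Fintype F] (hW : IsAdmissibleWeighting q wt Y)
    (hq : Fintype.card F = q) (hY : Y ⊆ allLines F V) {A : Submodule F V}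
    (hA : finrank F A = 1) (hwA : wt A = 1 / q) : IsTrivialCL Y := by
  have hvals (Q : Submodule F V) (hQ : finrank F Q = 1) : wt Q = 0 ∨ wt Q = 1 / q := by
    obtain rfl | hQA := eq_or_ne Q A
    · exact Or.inr hwA
    exact (hW.mem_and_weights_of_weight_eq_inv hq (finrank_sup_eq_two hA hQ hQA.symm)
      ⟨hA, le_sup_left⟩ hwA).2.1 Q ⟨hQ, le_sup_right⟩
  have hS : IsJoinClosed {P : Submodule F V | finrank F P = 1 ∧ wt P = 0} :=
    fun P hP Q hQ hPQ R hR => ⟨hR.1, hW.weight_eq_zero_of_le_sup hq hP.1 hQ.1 hPQ hP.2 hQ.2 R hR⟩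
  have hwA0 : wt A ≠ 0 := hwA ▸ one_div_ne_zero (Nat.cast_ne_zero.2 (hq ▸ Fintype.card_ne_zero))
  obtain ⟨H, hH, hQH⟩ := hS.exists_hyperplane hA (fun h => hwA0 h.2)
    (fun L hL hAL => by
      obtain ⟨R, hR, hwR⟩ := (hW.mem_and_weights_of_weight_eq_inv hq hL ⟨hA, hAL⟩ hwA).2.2
      exact ⟨R, hR, hR.1, hwR⟩)
  refine ⟨linesIn H, Or.inr (Or.inr (Or.inl ⟨H, hH, rfl⟩)), Or.inr (Set.ext fun L => ?_)⟩
  refine ⟨fun hLY => ⟨hY hLY, fun ⟨hL, hLH⟩ => ?_⟩, fun ⟨hL, hLH⟩ => ?_⟩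
  · exact hW.notMem_of_forall_weight_eq_zero hL
      (fun P hP => ((hQH P hP.1).1 (hP.2.trans hLH)).2) hLY
  · obtain ⟨Q, hQ, hQH'⟩ := exists_point_le_not_le fun h => hLH ⟨hL, h⟩
    have hwQ : wt Q = 1 / q :=
      (hvals Q hQ.1).resolve_left fun h => hQH' ((hQH Q hQ.1).2 ⟨hQ.1, h⟩)
    exact (hW.mem_and_weights_of_weight_eq_inv hq hL hQ hwQ).1

end IsAdmissibleWeighting

end Weighting

end CameronLiebler

open CameronLiebler

open scoped Classical in
theorem stmt_9_general (q : ℕ) (F V : Type) [Field F] [Fintype F] (hq : Fintype.card F = q)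
    [AddCommGroup V] [Module F V]
    (wt : Submodule F V → ℝ) (Y : Set (Submodule F V)) (hY : Y ⊆ allLines F V)
    (hbool : ∀ L : Submodule F V, finrank F L = 2 →
      subWeight wt L = if L ∈ Y then 1 else 0)
    (hwts : ∀ P : Submodule F V, finrank F P = 1 →
      wt P = -(1 / (q ^ 2 + q : ℝ)) ∨ wt P = 0 ∨ wt P = 1 / ((q : ℝ) + 1) ∨
        wt P = 1 / (q : ℝ)) :
    IsTrivialCL Y := by
  have hW : IsAdmissibleWeighting q wt Y := ⟨hbool, hwts⟩
  have hq0 : 0 < q := hq ▸ Fintype.card_pos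
  by_cases hA : ∃ A : Submodule F V, finrank F A = 1 ∧ wt A = 1 / q
  · obtain ⟨A, hA, hwA⟩ := hA
    exact hW.isTrivialCL_of_weight_eq_inv hq hY hA hwA
  by_cases hD : ∃ D : Submodule F V, finrank F D = 1 ∧ wt D = -(1 / (q ^ 2 + q))
  · obtain ⟨D, hD, hwD⟩ := hD
    refine isTrivialCL_of_isTrivialCL_compl hY
      ((hW.dual hq).isTrivialCL_of_weight_eq_inv hq Set.sdiff_subset hD ?_)
    rw [hwD, sub_neg_eq_add, one_div_succ_add_one_div_sq_add hq0]
  have hvals (P : Submodule F V) (hP : finrank F P = 1) : wt P = 0 ∨ wt P = 1 / (q + 1) := by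
    rcases hwts P hP with h | h | h | h
    exacts [absurd ⟨P, hP, h⟩ hD, Or.inl h, Or.inr h, absurd ⟨P, hP, h⟩ hA]
  by_cases hB : ∃ B : Submodule F V, finrank F B = 1 ∧ wt B = 1 / (q + 1)
  · obtain ⟨B, hB, hwB⟩ := hB
    refine isTrivialCL_of_isTrivialCL_compl hY
      ((hW.dual hq).isTrivialCL_of_forall_weight_eq_zero Set.sdiff_subset fun P hP => ?_)
    rw [(hvals P hP).resolve_left fun h =>
      hW.false_of_weight_eq_zero_of_weight_eq_inv_succ hq hP hB h hwB, sub_self]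
  · exact hW.isTrivialCL_of_forall_weight_eq_zero hY fun P hP =>
      (hvals P hP).resolve_right fun h => hB ⟨P, hP, h⟩

open scoped Classical in
/-- If every line has weight in `{0,1}` and every point weight lies in
`{-1/(q²+q), 0, 1/(q+1), 1/q}` (`n ≥ 4`), then the family `Y` of weight-1 lines is
trivial. -/
theorem stmt_9 (q n : ℕ) (F V : Type) [Field F] [Fintype F] (hq : Fintype.card F = q)
    [AddCommGroup V] [Module F V] (hn : 4 ≤ n) (hdim : finrank F V = n)
    (wt : Submodule F V → ℝ) (Y : Set (Submodule F V)) (hY : Y ⊆ allLines F V)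
    (hbool : ∀ L : Submodule F V, finrank F L = 2 →
      subWeight wt L = if L ∈ Y then 1 else 0)
    (hwts : ∀ P : Submodule F V, finrank F P = 1 →
      wt P = -(1 / (q ^ 2 + q : ℝ)) ∨ wt P = 0 ∨ wt P = 1 / ((q : ℝ) + 1) ∨
        wt P = 1 / (q : ℝ)) :
    IsTrivialCL Y :=
  stmt_9_general q F V hq wt Y hY hbool hwts
end

section
/- Let wt : points(V) → ℝ, V an n-dimensional F_q-space, such that every line has weight in {0,1}. Let S₁,…,S_q be distinct hyperplanes of V all containing a common (n-2)-space T, with every point of S₁ of weight 0, and for each j ∈ {2,…,q} all points of S_j \ S₁ having constant weight w_j ∈ {0, 1/q}. If K is a line meeting T trivially and contained in the union of S₁,…,S_q together with one further line S' (disjoint from T outside one point) whose points outside S₁ have weight in {0,1/q}, then the number of j ∈ {2,…,q} with w_j = 1/q is 0 or q−1. -/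
/-!
The line `K` meets each hyperplane `S j` in a point, and these `q` points are distinct because
two of the `S j` meet exactly in `T`, which misses `K`. Together with `R` they are all `q + 1`
points of `K`, so `wt K = wt R + a / q` where `a` counts the `j ≠ 0` with `w j = 1 / q`.
As `wt K ∈ {0, 1}`, `wt R ∈ {0, 1 / q}` and `a < q`, this forces `a = 0` or `a = q - 1`.
-/

open Module

section Points

variable {F V : Type*} [Field F] [AddCommGroup V] [Module F V]

lemma nat_card_points_le_eq_card_projectivization (L : Submodule F V) :
    Nat.card {P : Submodule F V // finrank F P = 1 ∧ P ≤ L} =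
      Nat.card (Projectivization F L) := by
  symm
  refine Nat.card_eq_of_bijective
    (fun p => ⟨p.submodule.map L.subtype, by simp [p.finrank_submodule],
      Submodule.map_subtype_le _ _⟩)
    ⟨fun p p' h => ?_, fun ⟨P, hP, hPL⟩ => ?_⟩
  · exact Projectivization.submodule_injective
      (Submodule.map_injective_of_injective L.subtype_injective (congrArg Subtype.val h))
  · have hmap : (P.comap L.subtype).map L.subtype = P := by
      rw [Submodule.map_comap_subtype, inf_eq_right.mpr hPL]
    have hrank : finrank F (P.comap L.subtype) = 1 := by
      rw [← Submodule.finrank_map_subtype_eq, hmap, hP]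
    exact ⟨.mk'' _ hrank, Subtype.ext (by simpa using hmap)⟩

lemma nat_card_points_le_of_finrank_eq_two [Finite F] {L : Submodule F V}
    (hL : finrank F L = 2) :
    Nat.card {P : Submodule F V // finrank F P = 1 ∧ P ≤ L} = Nat.card F + 1 := by
  rw [nat_card_points_le_eq_card_projectivization, Projectivization.card_of_finrank_two F L hL]

lemma finrank_inf_add_one_of_not_le [FiniteDimensional F V] {K H : Submodule F V}
    (hH : finrank F H + 1 = finrank F V) (hKH : ¬ K ≤ H) :
    finrank F ↥(K ⊓ H) + 1 = finrank F K := by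
  have hlt : H < K ⊔ H := lt_of_le_of_ne le_sup_right fun h => hKH (h ▸ le_sup_left)
  have := Submodule.finrank_lt_finrank_of_lt hlt
  have := (K ⊔ H).finrank_le
  have := Submodule.finrank_sup_add_finrank_inf_eq K H
  omega

lemma inf_eq_of_ne_of_le [FiniteDimensional F V] {H₁ H₂ T : Submodule F V}
    (h₁ : finrank F H₁ + 1 = finrank F V) (h₂ : finrank F H₂ + 1 = finrank F V)
    (hT : finrank F T + 2 = finrank F V) (hT₁ : T ≤ H₁) (hT₂ : T ≤ H₂)
    (hne : H₁ ≠ H₂) :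
    H₁ ⊓ H₂ = T := by
  have hH₁H₂ : ¬ H₁ ≤ H₂ := fun h => hne (Submodule.eq_of_le_of_finrank_eq h (by omega))
  have := finrank_inf_add_one_of_not_le h₂ hH₁H₂
  exact (Submodule.eq_of_le_of_finrank_eq (le_inf hT₁ hT₂) (by omega)).symm

lemma not_inf_le_of_inf_eq {K T H₁ H₂ : Submodule F V} (hKT : K ⊓ T = ⊥)
    (hP : finrank F ↥(K ⊓ H₁) = 1) (h : H₁ ⊓ H₂ = T) : ¬ K ⊓ H₁ ≤ H₂ := by
  intro hle
  have : K ⊓ H₁ ≤ K ⊓ T := h ▸ le_inf inf_le_left (le_inf inf_le_right hle)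
  rw [hKT, le_bot_iff] at this
  rw [this, finrank_bot] at hP
  exact zero_ne_one hP

lemma setOf_points_le_eq_insert_range [Finite F] {ι : Type*} [Finite ι]
    (hι : Nat.card ι = Nat.card F)
    {K R : Submodule F V} (hK : finrank F K = 2) (hR : finrank F R = 1) (hRK : R ≤ K)
    {p : ι → Submodule F V} (hp : Function.Injective p)
    (hpK : ∀ i, finrank F (p i) = 1 ∧ p i ≤ K)
    (hRp : R ∉ Set.range p) :
    {P : Submodule F V | finrank F P = 1 ∧ P ≤ K} = insert R (Set.range p) := by
  have hcard : Set.ncard {P : Submodule F V | finrank F P = 1 ∧ P ≤ K} = Nat.card F + 1 := by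
    rw [← Nat.card_coe_set_eq]
    exact nat_card_points_le_of_finrank_eq_two hK
  refine (Set.eq_of_subset_of_ncard_le ?_ ?_ (Set.finite_of_ncard_ne_zero (by omega))).symm
  · rintro P (rfl | ⟨i, rfl⟩)
    exacts [⟨hR, hRK⟩, hpK i]
  · rw [hcard, Set.ncard_insert_of_notMem hRp, Set.ncard_range_of_injective hp, hι]

end Points

lemma subWeight_eq_add_sum {F V : Type} [Field F] [Finite F] [AddCommGroup V] [Module F V]
    {ι : Type*} [Fintype ι] (hι : Nat.card ι = Nat.card F) (wt : Submodule F V → ℝ)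
    {K R : Submodule F V} (hK : finrank F K = 2) (hR : finrank F R = 1) (hRK : R ≤ K)
    {p : ι → Submodule F V} (hp : Function.Injective p)
    (hpK : ∀ i, finrank F (p i) = 1 ∧ p i ≤ K)
    (hRp : R ∉ Set.range p) :
    subWeight wt K = wt R + ∑ i, wt (p i) := by
  rw [subWeight, setOf_points_le_eq_insert_range hι hK hR hRK hp hpK hRp,
    finsum_mem_insert _ hRp (Set.finite_range p), finsum_mem_range hp, finsum_eq_sum_of_fintype]

lemma Finset.sum_eq_card_filter_nsmul {ι M : Type*} [AddCommMonoid M] [DecidableEq M]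
    {s : Finset ι} {f : ι → M} {c : M} (hf : ∀ i ∈ s, f i = 0 ∨ f i = c) :
    ∑ i ∈ s, f i = (s.filter (f · = c)).card • c := by
  rw [← Finset.sum_filter_add_sum_filter_not s (f · = c),
    Finset.sum_eq_card_nsmul fun i hi => (Finset.mem_filter.1 hi).2,
    Finset.sum_eq_zero fun i hi => (hf i (Finset.mem_filter.1 hi).1).resolve_right
      (Finset.mem_filter.1 hi).2, add_zero]

lemma Fin.sum_eq_nat_card_mul {q : ℕ} [NeZero q] {f w : Fin q → ℝ} {c : ℝ} (h0 : f 0 = 0)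
    (hfw : ∀ j ≠ 0, f j = w j) (hw : ∀ j, w j = 0 ∨ w j = c) :
    ∑ j, f j = Nat.card {j : Fin q // j ≠ 0 ∧ w j = c} * c := by
  classical
  rw [Nat.card_eq_fintype_card, Fintype.card_subtype, ← nsmul_eq_mul,
    ← Finset.add_sum_erase _ _ (Finset.mem_univ 0), h0, zero_add,
    Finset.sum_congr rfl fun j hj => hfw j (Finset.ne_of_mem_erase hj),
    Finset.sum_eq_card_filter_nsmul fun j _ => hw j]
  congr 2
  ext j
  simp [and_comm]

lemma Fin.nat_card_ne_zero_and_lt {q : ℕ} [NeZero q] (p : Fin q → Prop) :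
    Nat.card {j : Fin q // j ≠ 0 ∧ p j} < q := by
  classical
  simpa [Nat.card_eq_fintype_card] using
    Fintype.card_subtype_lt (p := fun j : Fin q => j ≠ 0 ∧ p j) (x := 0) (by simp)

lemma eq_zero_or_eq_sub_one_of_add_mem {q a : ℕ} (hq : 0 < q) (ha : a < q) {r : ℝ}
    (hr : r = 0 ∨ r = 1 / q) (h : r + a * (1 / q) = 0 ∨ r + a * (1 / q) = 1) :
    a = 0 ∨ a = q - 1 := by
  have hq' : (q : ℝ) ≠ 0 := by positivity
  rcases hr with rfl | rfl <;> rcases h with h | h <;> field_simp at h <;> norm_cast at h <;> omega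

/-- Claim 2 of the main proof: given `q` distinct hyperplanes `S 0, …, S (q-1)`
through a common `(n-2)`-space `T`, with all points of `S 0` of weight `0` and the
points of `S j \ S 0` of constant weight `w j ∈ {0, 1/q}`, and a line `K` meeting
`T` trivially whose extra point `R` (on none of the `S j`) has weight in
`{0, 1/q}`, the number of `j ≠ 0` with `w j = 1/q` is `0` or `q - 1`. -/
theorem stmt_17 (q n : ℕ) [NeZero q] (F V : Type) [Field F] [Fintype F] (hq : Fintype.card F = q)
    [AddCommGroup V] [Module F V] (hn : 3 ≤ n) (hdim : finrank F V = n)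
    (wt : Submodule F V → ℝ)
    (hline : ∀ L : Submodule F V, finrank F L = 2 →
      subWeight wt L = 0 ∨ subWeight wt L = 1)
    (T : Submodule F V) (hT : finrank F T = n - 2)
    (S : Fin q → Submodule F V) (hSdist : Function.Injective S)
    (hShyp : ∀ j, finrank F (S j) = n - 1) (hST : ∀ j, T ≤ S j)
    (hS0 : ∀ P : Submodule F V, finrank F P = 1 → P ≤ S 0 → wt P = 0)
    (w : Fin q → ℝ) (hw : ∀ j, w j = 0 ∨ w j = 1 / (q : ℝ))
    (hSw : ∀ j, j ≠ 0 → ∀ P : Submodule F V, finrank F P = 1 →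
      P ≤ S j → ¬ P ≤ S 0 → wt P = w j)
    (K : Submodule F V) (hK : finrank F K = 2) (hKT : K ⊓ T = ⊥)
    (R : Submodule F V) (hR : finrank F R = 1) (hRK : R ≤ K)
    (hRS : ∀ j, ¬ R ≤ S j) (hRw : wt R = 0 ∨ wt R = 1 / (q : ℝ)) :
    Nat.card {j : Fin q // j ≠ 0 ∧ w j = 1 / (q : ℝ)} = 0 ∨
    Nat.card {j : Fin q // j ≠ 0 ∧ w j = 1 / (q : ℝ)} = q - 1 := by
  have : FiniteDimensional F V := .of_finrank_pos (by omega)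
  have hS : ∀ j, finrank F (S j) + 1 = finrank F V := fun j => by rw [hShyp, hdim]; omega
  have hSS : ∀ i j, i ≠ j → S i ⊓ S j = T := fun i j hij =>
    inf_eq_of_ne_of_le (hS i) (hS j) (by omega) (hST i) (hST j) (hSdist.ne hij)
  have hpt : ∀ j, finrank F ↥(K ⊓ S j) = 1 := fun j => by
    have := finrank_inf_add_one_of_not_le (hS j) fun h => hRS j (hRK.trans h)
    omega
  have hsep : ∀ i j, i ≠ j → ¬ K ⊓ S i ≤ S j := fun i j hij =>
    not_inf_le_of_inf_eq hKT (hpt i) (hSS i j hij)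
  have hKwt : subWeight wt K = wt R + ∑ j, wt (K ⊓ S j) :=
    subWeight_eq_add_sum (by simp [hq]) wt hK hR hRK
      (fun i j h => by_contra fun hij => hsep i j hij (h ▸ inf_le_right))
      (fun j => ⟨hpt j, inf_le_left⟩) (by rintro ⟨j, rfl⟩; exact hRS j inf_le_right)
  have hsum : ∑ j, wt (K ⊓ S j) =
      Nat.card {j : Fin q // j ≠ 0 ∧ w j = 1 / (q : ℝ)} * (1 / q) :=
    Fin.sum_eq_nat_card_mul (hS0 _ (hpt 0) inf_le_right)
      (fun j hj => hSw j hj _ (hpt j) inf_le_right (hsep j 0 hj)) hw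
  have hKline := hline K hK
  rw [hKwt, hsum] at hKline
  exact eq_zero_or_eq_sub_one_of_add_mem (NeZero.pos q) (Fin.nat_card_ne_zero_and_lt _) hRw hKline
end
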